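/- arXiv:2407.01234 — 2 statements merged into one kernel-verified Lean document; each statement's English description precedes it below -/
import Mathlib

section
/- Under the same hypotheses as the previous statement (separable payoffs, differentiable optimal control curves a(z), b(z) satisfying Z_f(z)q_{ψ,f}(a(z)) = Z_e(z)q_{ψ,e}(b(z)) and Z_f(z)q_{φ,f}(a(z)) = Z_e(z)q_{φ,e}(b(z)), nonzero determinant D), the upper control point satisfies db/dz = [Z'_e/Z_e − Z'_f/Z_f]·(q_{ψ,e}(b)q'_{φ,f}(a) − q'_{ψ,f}(a)q_{φ,e}(b))/D(z). -/
/-- Derivative of the upper optimal control point with respect to the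
separable variable `z` (equation (14) of the paper). -/
theorem db_dz_formula
    (ψ φ Fx Ex Zf Ze a b : ℝ → ℝ)
    (qψf qψe qφf qφe : ℝ → ℝ)
    (hqψf : ∀ x, qψf x = deriv (fun t => Fx t / ψ t) x * (ψ x) ^ 2 /
        (φ x * deriv ψ x - deriv φ x * ψ x))
    (hqψe : ∀ x, qψe x = deriv (fun t => Ex t / ψ t) x * (ψ x) ^ 2 /
        (φ x * deriv ψ x - deriv φ x * ψ x))
    (hqφf : ∀ x, qφf x = deriv (fun t => Fx t / φ t) x * (φ x) ^ 2 /
        (φ x * deriv ψ x - deriv φ x * ψ x))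
    (hqφe : ∀ x, qφe x = deriv (fun t => Ex t / φ t) x * (φ x) ^ 2 /
        (φ x * deriv ψ x - deriv φ x * ψ x))
    (hW : ∀ x, φ x * deriv ψ x - deriv φ x * ψ x ≠ 0)
    (hZf : Differentiable ℝ Zf) (hZe : Differentiable ℝ Ze)
    (hZfpos : ∀ z, 0 < Zf z) (hZepos : ∀ z, 0 < Ze z)
    (ha : Differentiable ℝ a) (hb : Differentiable ℝ b)
    (hqψf' : ∀ z, DifferentiableAt ℝ qψf (a z))
    (hqψe' : ∀ z, DifferentiableAt ℝ qψe (b z))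
    (hqφf' : ∀ z, DifferentiableAt ℝ qφf (a z))
    (hqφe' : ∀ z, DifferentiableAt ℝ qφe (b z))
    (heq1 : ∀ z, Zf z * qψf (a z) = Ze z * qψe (b z))
    (heq2 : ∀ z, Zf z * qφf (a z) = Ze z * qφe (b z))
    (z : ℝ)
    (hD : deriv qψf (a z) * deriv qφe (b z)
        - deriv qψe (b z) * deriv qφf (a z) ≠ 0) :
    deriv b z = (deriv Ze z / Ze z - deriv Zf z / Zf z) *
      ((qψe (b z) * deriv qφf (a z) - deriv qψf (a z) * qφe (b z)) /
       (deriv qψf (a z) * deriv qφe (b z)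
        - deriv qψe (b z) * deriv qφf (a z))) := by
  have hfun1 : (fun z => Zf z * qψf (a z)) = (fun z => Ze z * qψe (b z)) := funext heq1
  have hfun2 : (fun z => Zf z * qφf (a z)) = (fun z => Ze z * qφe (b z)) := funext heq2
  have H1 : HasDerivAt (fun z => Zf z * qψf (a z))
      (deriv Zf z * qψf (a z) + Zf z * (deriv qψf (a z) * deriv a z)) z :=
    (hZf z).hasDerivAt.mul ((hqψf' z).hasDerivAt.comp z (ha z).hasDerivAt)
  have H1' : HasDerivAt (fun z => Ze z * qψe (b z))
      (deriv Ze z * qψe (b z) + Ze z * (deriv qψe (b z) * deriv b z)) z :=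
    (hZe z).hasDerivAt.mul ((hqψe' z).hasDerivAt.comp z (hb z).hasDerivAt)
  have H2 : HasDerivAt (fun z => Zf z * qφf (a z))
      (deriv Zf z * qφf (a z) + Zf z * (deriv qφf (a z) * deriv a z)) z :=
    (hZf z).hasDerivAt.mul ((hqφf' z).hasDerivAt.comp z (ha z).hasDerivAt)
  have H2' : HasDerivAt (fun z => Ze z * qφe (b z))
      (deriv Ze z * qφe (b z) + Ze z * (deriv qφe (b z) * deriv b z)) z :=
    (hZe z).hasDerivAt.mul ((hqφe' z).hasDerivAt.comp z (hb z).hasDerivAt)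
  have key1 := (hfun1 ▸ H1).unique H1'
  have key2 := (hfun2 ▸ H2).unique H2'
  have hZfne : Zf z ≠ 0 := (hZfpos z).ne'
  have hZene : Ze z ≠ 0 := (hZepos z).ne'
  have hD' : Zf z * Ze z *
      (deriv qψf (a z) * deriv qφe (b z) - deriv qψe (b z) * deriv qφf (a z)) ≠ 0 :=
    mul_ne_zero (mul_ne_zero hZfne hZene) hD
  have main : deriv b z * (Zf z * Ze z *
      (deriv qψf (a z) * deriv qφe (b z) - deriv qψe (b z) * deriv qφf (a z))) =
      (deriv Ze z * Zf z - deriv Zf z * Ze z) *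
      (qψe (b z) * deriv qφf (a z) - deriv qψf (a z) * qφe (b z)) := by
    linear_combination (Zf z * deriv qφf (a z)) * key1
      - (Zf z * deriv qψf (a z)) * key2
      - (deriv Zf z * deriv qφf (a z)) * (heq1 z)
      + (deriv Zf z * deriv qψf (a z)) * (heq2 z)
  have hβ : deriv b z = (deriv Ze z * Zf z - deriv Zf z * Ze z) *
      (qψe (b z) * deriv qφf (a z) - deriv qψf (a z) * qφe (b z)) /
      (Zf z * Ze z *
      (deriv qψf (a z) * deriv qφe (b z) - deriv qψe (b z) * deriv qφf (a z))) := by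
    rw [eq_div_iff hD']; linear_combination main
  rw [hβ]; field_simp
end

section
/- Under the same hypotheses as the previous statement, the solution for Δa satisfies Δa/Δz = (1/K_f)·[Z'_e(q_{ψ,e}q'_{φ,e} − q'_{ψ,e}q_{φ,e}) + Z'_f(q'_{ψ,e}q_{φ,f} − q_{ψ,f}q'_{φ,e})]/(q'_{ψ,f}q'_{φ,e} − q'_{ψ,e}q'_{φ,f}), where the constraint Z_f q_{ψ,f} = Z_e q_{ψ,e} and Z_f q_{φ,f} = Z_e q_{φ,e} (the zeroth-order smooth-fit identities) are also assumed. -/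
/-- Finite-difference formula (15): unique solution for `Δa` of the
first-order Taylor-expanded smooth-fit system, using also the zeroth-order
smooth-fit identities. -/
theorem delta_a_formula
    (qψf qψf' qφf qφf' qψe qψe' qφe qφe' Zf Zf' Ze Ze' Δz Δa Δb : ℝ)
    (hΔz : Δz ≠ 0)
    (hKf : Zf + Δz * Zf' ≠ 0) (hKe : Ze + Δz * Ze' ≠ 0)
    (hD : qψf' * qφe' - qψe' * qφf' ≠ 0)
    (h0ψ : Zf * qψf = Ze * qψe)
    (h0φ : Zf * qφf = Ze * qφe)
    (h1 : Δa * qψf' * (Zf + Δz * Zf')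
        = Δb * qψe' * (Ze + Δz * Ze') + Δz * (Ze' * qψe - Zf' * qψf))
    (h2 : Δa * qφf' * (Zf + Δz * Zf')
        = Δb * qφe' * (Ze + Δz * Ze') + Δz * (Ze' * qφe - Zf' * qφf)) :
    Δa / Δz = (1 / (Zf + Δz * Zf')) *
      ((Ze' * (qψe * qφe' - qψe' * qφe) + Zf' * (qψe' * qφf - qψf * qφe')) /
       (qψf' * qφe' - qψe' * qφf')) := by
  have hD' : qφe' * qψf' - qψe' * qφf' ≠ 0 := by rwa [mul_comm qφe']
  field_simp
  linear_combination qφe' * h1 - qψe' * h2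
end
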